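/- Let α, β > 0 and (v, θ, ω) ∈ ℝ³ with H₁(v,θ,ω) < 0 and H₂(v,θ,ω) < 0. Set D = 2ω² + α²v²/β² − 4αθ. Then D > α²v²/β², and with s₁ = 1, s₂ ∈ {−1,1} satisfying s₂·v = −|v|, t₁ = (−2ω − α|v|/β + √D)/(2α), t₂ = |v|/β, and t₃ = (−α|v|/β + √D)/(2α), one has t₁ > 0 and t₃ > 0, and the C2a final state from (v, θ, ω) equals (0, 0, 0). -/

import Mathlib

noncomputable def H1 (α v θ ω : ℝ) : ℝ := 2 * α * θ + ω * |ω|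

noncomputable def H2 (α β v θ ω : ℝ) : ℝ := ω * |ω| / (2 * α) + θ + ω * |v| / β

/-- The C2a final state `(v_f, θ_f, ω_f)`. -/
noncomputable def c2aFinal (α β v θ ω t₁ t₂ t₃ s₁ s₂ : ℝ) : ℝ × ℝ × ℝ :=
  (v + s₂ * β * t₂,
   θ + ω * t₁ + s₁ * α * t₁ ^ 2 / 2 + (ω + s₁ * α * t₁) * (t₂ + t₃) - s₁ * α * t₃ ^ 2 / 2,
   ω + s₁ * α * t₁ - s₁ * α * t₃)

/-!
Write `m = α|v|/β` and `r = √D`. With `t₁ = (r - m - 2ω)/(2α)`, `t₂ = m/α`, `t₃ = (r - m)/(2α)`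
the final angular rate is `ω + α(t₁ - t₃) = 0`, and the final angle simplifies to `(r² - D)/(4α)`,
which vanishes. Positivity of the times amounts to `m < r` and `2ω + m < r`, i.e. `m² < D` and
(for `ω > 0`) `(2ω + m)² < D`; the first is `2αθ < ω²`, a consequence of `H₁ < 0`, and the second
is `4α H₂ < 0`.
-/

noncomputable def c2aDiscriminant (α β v θ ω : ℝ) : ℝ :=
  2 * ω ^ 2 + α ^ 2 * v ^ 2 / β ^ 2 - 4 * α * θ

section Discriminant

variable {α β v θ ω : ℝ}

lemma two_mul_mul_lt_sq_of_H1_neg (h : H1 α v θ ω < 0) : 2 * α * θ < ω ^ 2 := by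
  unfold H1 at h
  nlinarith [neg_abs_le ω, abs_nonneg ω, sq_abs ω]

lemma lt_c2aDiscriminant_of_H1_neg (h : H1 α v θ ω < 0) :
    α ^ 2 * v ^ 2 / β ^ 2 < c2aDiscriminant α β v θ ω := by
  have := two_mul_mul_lt_sq_of_H1_neg h
  unfold c2aDiscriminant
  linarith

lemma c2aDiscriminant_pos_of_H1_neg (h : H1 α v θ ω < 0) : 0 < c2aDiscriminant α β v θ ω :=
  (by positivity : 0 ≤ α ^ 2 * v ^ 2 / β ^ 2).trans_lt (lt_c2aDiscriminant_of_H1_neg h)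

lemma mul_abs_div_lt_sqrt_c2aDiscriminant (hα : 0 < α) (hβ : 0 < β) (h : H1 α v θ ω < 0) :
    α * |v| / β < √(c2aDiscriminant α β v θ ω) := by
  rw [Real.lt_sqrt (by positivity), div_pow, mul_pow, sq_abs]
  exact lt_c2aDiscriminant_of_H1_neg h

lemma sq_two_mul_add_lt_c2aDiscriminant_of_H2_neg (hα : 0 < α) (hω : 0 < ω)
    (h : H2 α β v θ ω < 0) :
    (2 * ω + α * |v| / β) ^ 2 < c2aDiscriminant α β v θ ω := by
  unfold H2 at h
  rw [abs_of_pos hω] at h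
  have hscaled : 4 * α * (ω * ω / (2 * α) + θ + ω * |v| / β)
      = 2 * ω ^ 2 + 4 * α * θ + 4 * ω * (α * |v| / β) := by
    field_simp
    ring
  have : 4 * α * (ω * ω / (2 * α) + θ + ω * |v| / β) < 0 := mul_neg_of_pos_of_neg (by positivity) h
  unfold c2aDiscriminant
  rw [← sq_abs v, ← mul_pow, ← div_pow]
  nlinarith

lemma two_mul_add_mul_abs_div_lt_sqrt_c2aDiscriminant (hα : 0 < α) (hβ : 0 < β)
    (hH1 : H1 α v θ ω < 0) (hH2 : H2 α β v θ ω < 0) :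
    2 * ω + α * |v| / β < √(c2aDiscriminant α β v θ ω) := by
  rcases le_or_gt ω 0 with hω | hω
  · linarith [mul_abs_div_lt_sqrt_c2aDiscriminant hα hβ hH1]
  · rw [Real.lt_sqrt (by positivity)]
    exact sq_two_mul_add_lt_c2aDiscriminant_of_H2_neg hα hω hH2

end Discriminant

lemma c2aFinal_eq {α β : ℝ} (hα : α ≠ 0) (hβ : β ≠ 0) (v θ ω s₂ r : ℝ) :
    c2aFinal α β v θ ω ((-2 * ω - α * |v| / β + r) / (2 * α)) (|v| / β)
        ((-(α * |v| / β) + r) / (2 * α)) 1 s₂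
      = (v + s₂ * |v|, (r ^ 2 - c2aDiscriminant α β v θ ω) / (4 * α), 0) := by
  unfold c2aFinal c2aDiscriminant
  refine Prod.ext ?_ (Prod.ext ?_ ?_)
  · simp only
    field_simp
  · simp only
    rw [← sq_abs v]
    field_simp
    ring
  · simp only
    field_simp
    ring

lemma add_mul_abs_eq_zero_of_mul_eq_neg_abs {s v : ℝ} (h : s * v = -|v|) : v + s * |v| = 0 := by
  rcases abs_cases v with ⟨hv, -⟩ | ⟨hv, -⟩ <;> rw [hv] at h ⊢ <;> linarith

theorem stmt1_general (α β v θ ω : ℝ) (hα : 0 < α) (hβ : 0 < β)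
    (hH1 : H1 α v θ ω < 0) (hH2 : H2 α β v θ ω < 0)
    (D : ℝ) (hD : D = 2 * ω ^ 2 + α ^ 2 * v ^ 2 / β ^ 2 - 4 * α * θ)
    (s₁ s₂ : ℝ) (hs₁ : s₁ = 1) (hs₂v : s₂ * v = -|v|)
    (t₁ t₂ t₃ : ℝ)
    (ht₁ : t₁ = (-2 * ω - α * |v| / β + Real.sqrt D) / (2 * α))
    (ht₂ : t₂ = |v| / β)
    (ht₃ : t₃ = (-(α * |v| / β) + Real.sqrt D) / (2 * α)) :
    D > α ^ 2 * v ^ 2 / β ^ 2 ∧ 0 < t₁ ∧ 0 < t₃ ∧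
    c2aFinal α β v θ ω t₁ t₂ t₃ s₁ s₂ = (0, 0, 0) := by
  replace hD : D = c2aDiscriminant α β v θ ω := hD
  subst hD hs₁ ht₁ ht₂ ht₃
  refine ⟨lt_c2aDiscriminant_of_H1_neg hH1, ?_, ?_, ?_⟩
  · have := two_mul_add_mul_abs_div_lt_sqrt_c2aDiscriminant hα hβ hH1 hH2
    exact div_pos (by linarith) (by positivity)
  · have := mul_abs_div_lt_sqrt_c2aDiscriminant hα hβ hH1
    exact div_pos (by linarith) (by positivity)
  · rw [c2aFinal_eq hα.ne' hβ.ne', Real.sq_sqrt (c2aDiscriminant_pos_of_H1_neg hH1).le, sub_self,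
      zero_div, add_mul_abs_eq_zero_of_mul_eq_neg_abs hs₂v]

theorem stmt1 (α β v θ ω : ℝ) (hα : 0 < α) (hβ : 0 < β)
    (hH1 : H1 α v θ ω < 0) (hH2 : H2 α β v θ ω < 0)
    (D : ℝ) (hD : D = 2 * ω ^ 2 + α ^ 2 * v ^ 2 / β ^ 2 - 4 * α * θ)
    (s₁ s₂ : ℝ) (hs₁ : s₁ = 1) (hs₂ : s₂ = -1 ∨ s₂ = 1) (hs₂v : s₂ * v = -|v|)
    (t₁ t₂ t₃ : ℝ)
    (ht₁ : t₁ = (-2 * ω - α * |v| / β + Real.sqrt D) / (2 * α))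
    (ht₂ : t₂ = |v| / β)
    (ht₃ : t₃ = (-(α * |v| / β) + Real.sqrt D) / (2 * α)) :
    D > α ^ 2 * v ^ 2 / β ^ 2 ∧ 0 < t₁ ∧ 0 < t₃ ∧
    c2aFinal α β v θ ω t₁ t₂ t₃ s₁ s₂ = (0, 0, 0) :=
  stmt1_general α β v θ ω hα hβ hH1 hH2 D hD s₁ s₂ hs₁ hs₂v t₁ t₂ t₃ ht₁ ht₂ ht₃
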